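/- Let X_1, …, X_n be i.i.d. p-dimensional Gaussian random vectors with mean 0 and positive definite covariance matrix Σ* = (σ*_{ij}), Ω* = (Σ*)^{-1} with i-th column w*_i, and V_n = n^{-1} ∑_{k=1}^n X_k X_k^T. Fix indices i ≠ j with ω*_{ij} = 0, let B_{i,0} be the p × s_i matrix of distinct standard basis vectors indexing the support of w*_i, Ω_i* = (B_{i,0}^T Σ* B_{i,0})^{-1}, and a = e_j − B_{i,0} Ω_i* B_{i,0}^T Σ* e_j. Then E(a^T V_n w*_i) = 0 and Var(a^T V_n w*_i) = ( ω*_{ii} σ*_{jj} − ω*_{ii} e_j^T Σ* B_{i,0} Ω_i* B_{i,0}^T Σ* e_j )/n. -/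

import Mathlib

open MeasureTheory ProbabilityTheory Matrix Filter Real

noncomputable section

/-- A random vector `X` on a probability space is Gaussian with mean `m` and covariance
matrix `S`: every linear functional of `X` has a one-dimensional Gaussian distribution. -/
def IsGaussianRV {Ω : Type*} [MeasureSpace Ω] {p : ℕ}
    (m : Fin p → ℝ) (S : Matrix (Fin p) (Fin p) ℝ) (X : Ω → Fin p → ℝ) : Prop :=
  Measurable X ∧ ∀ a : Fin p → ℝ,
    Measure.map (fun ω => ∑ i, a i * X ω i) volume
      = gaussianReal (∑ i, a i * m i) (Real.toNNReal (a ⬝ᵥ S.mulVec a))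

/-- `X_1, …, X_n` are i.i.d. Gaussian vectors with mean `m` and covariance `S`. -/
def IsIIDGaussian {Ω : Type*} [MeasureSpace Ω] {n p : ℕ}
    (m : Fin p → ℝ) (S : Matrix (Fin p) (Fin p) ℝ) (X : Fin n → Ω → Fin p → ℝ) : Prop :=
  iIndepFun X volume ∧ ∀ k, IsGaussianRV m S (X k)

/-- `V_n = n⁻¹ ∑_{k=1}^n X_k X_kᵀ`. -/
def Vmat {Ω : Type*} {n p : ℕ} (X : Fin n → Ω → Fin p → ℝ) (ω : Ω) :
    Matrix (Fin p) (Fin p) ℝ :=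
  (n : ℝ)⁻¹ • Matrix.of fun a b => ∑ k, X k ω a * X k ω b

/-- The `p × s` selection matrix whose `b`-th column is the standard basis vector `e_{φ b}`. -/
def selMat {p s : ℕ} (φ : Fin s → Fin p) : Matrix (Fin p) (Fin s) ℝ :=
  Matrix.of fun a b => if a = φ b then 1 else 0

/-!
Write `w = w*_i` and `P = B Ω_i* Bᵀ Σ*`, the `Σ*`-orthogonal projection onto the span of the
selected basis vectors, so that `a = (1 - P) e_j`. The statistic
`aᵀ V_n w = n⁻¹ ∑ₖ (aᵀX_k)(wᵀX_k)` is an average of i.i.d. products of two jointly Gaussian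
variables; polarization reduces their first two moments to the moments `E x² = v`, `E x⁴ = 3v²`
of one-dimensional Gaussians (the derivatives at `0` of the mgf `exp (v t² / 2)`), giving
`E = aᵀΣ*w` and `Var = ((aᵀΣ*a)(wᵀΣ*w) + (aᵀΣ*w)²)/n`. As `w` is supported on the selected
coordinates, `Pw = w`; since `P` is `Σ*`-self-adjoint, `aᵀΣ*w = e_jᵀΣ*(1 - P)w = 0`, and since
it is idempotent, `aᵀΣ*a = σ*_jj - e_jᵀΣ*P e_j`. Finally `wᵀΣ*w = ω*_ii`.
-/

open scoped NNReal

lemma hasDerivAt_mul_exp_half_sq (v : ℝ) {Q : ℝ → ℝ} {q t : ℝ} (hQ : HasDerivAt Q q t) :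
    HasDerivAt (fun t => Q t * rexp (v * t ^ 2 / 2))
      ((q + v * t * Q t) * rexp (v * t ^ 2 / 2)) t := by
  have h : HasDerivAt (fun t => v * t ^ 2 / 2) (v * t) t :=
    (((hasDerivAt_pow 2 t).const_mul v).div_const 2).congr_deriv (by norm_num; ring)
  exact (hQ.mul h.exp).congr_deriv (by ring)

lemma iteratedDeriv_two_exp_half_sq (v : ℝ) :
    iteratedDeriv 2 (fun t => rexp (v * t ^ 2 / 2))
      = fun t => (v + v ^ 2 * t ^ 2) * rexp (v * t ^ 2 / 2) := by
  have d1 : deriv (fun t => rexp (v * t ^ 2 / 2)) = fun t => v * t * rexp (v * t ^ 2 / 2) := by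
    funext t
    simpa using (hasDerivAt_mul_exp_half_sq v (hasDerivAt_const t (1 : ℝ))).deriv
  rw [iteratedDeriv_succ, iteratedDeriv_one, d1]
  funext t
  exact (hasDerivAt_mul_exp_half_sq v ((hasDerivAt_id' t).const_mul v)).deriv.trans (by ring)

lemma iteratedDeriv_four_exp_half_sq_zero (v : ℝ) :
    iteratedDeriv 4 (fun t => rexp (v * t ^ 2 / 2)) 0 = 3 * v ^ 2 := by
  have d3 : deriv (fun t => (v + v ^ 2 * t ^ 2) * rexp (v * t ^ 2 / 2))
      = fun t => (3 * v ^ 2 * t + v ^ 3 * t ^ 3) * rexp (v * t ^ 2 / 2) := by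
    funext t
    exact (hasDerivAt_mul_exp_half_sq v
      (((hasDerivAt_pow 2 t).const_mul (v ^ 2)).const_add v)).deriv.trans (by norm_num; ring)
  have d4 := hasDerivAt_mul_exp_half_sq v (t := 0)
    (((hasDerivAt_id' 0).const_mul (3 * v ^ 2)).add ((hasDerivAt_pow 3 0).const_mul (v ^ 3)))
  rw [iteratedDeriv_succ, iteratedDeriv_succ, iteratedDeriv_two_exp_half_sq, d3]
  exact d4.deriv.trans (by simp)

lemma integral_pow_gaussianReal_eq_iteratedDeriv (v : ℝ≥0) (k : ℕ) :
    ∫ x, x ^ k ∂gaussianReal 0 v = iteratedDeriv k (fun t => rexp (v * t ^ 2 / 2)) 0 := by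
  simpa [mgf_fun_id_gaussianReal] using
    (iteratedDeriv_mgf_zero (X := fun x => x) (μ := gaussianReal 0 v) (by simp) k).symm

lemma integral_sq_gaussianReal (v : ℝ≥0) : ∫ x, x ^ 2 ∂gaussianReal 0 v = v := by
  simp [integral_pow_gaussianReal_eq_iteratedDeriv, iteratedDeriv_two_exp_half_sq]

lemma integral_pow_four_gaussianReal (v : ℝ≥0) :
    ∫ x, x ^ 4 ∂gaussianReal 0 v = 3 * (v : ℝ) ^ 2 := by
  rw [integral_pow_gaussianReal_eq_iteratedDeriv, iteratedDeriv_four_exp_half_sq_zero]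

lemma integrable_pow_gaussianReal (μ : ℝ) (v : ℝ≥0) (k : ℕ) :
    Integrable (fun x => x ^ k) (gaussianReal μ v) := by
  refine ((memLp_id_gaussianReal' k (by simp)).integrable_norm_pow').mono' (by fun_prop) ?_
  filter_upwards with x
  simp [norm_pow]

namespace Matrix.IsSymm

variable {m : Type*} [Fintype m] {S : Matrix m m ℝ}

lemma dotProduct_mulVec_comm (hS : S.IsSymm) (c d : m → ℝ) :
    c ⬝ᵥ S *ᵥ d = d ⬝ᵥ S *ᵥ c := by
  rw [dotProduct_mulVec, dotProduct_comm, ← mulVec_transpose, hS.eq]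

lemma add_dotProduct_mulVec_add (hS : S.IsSymm) (c d : m → ℝ) :
    (c + d) ⬝ᵥ S *ᵥ (c + d) = c ⬝ᵥ S *ᵥ c + d ⬝ᵥ S *ᵥ d + 2 * (c ⬝ᵥ S *ᵥ d) := by
  rw [mulVec_add, add_dotProduct, dotProduct_add, dotProduct_add,
    hS.dotProduct_mulVec_comm d c]
  ring

lemma sub_dotProduct_mulVec_sub (hS : S.IsSymm) (c d : m → ℝ) :
    (c - d) ⬝ᵥ S *ᵥ (c - d) = c ⬝ᵥ S *ᵥ c + d ⬝ᵥ S *ᵥ d - 2 * (c ⬝ᵥ S *ᵥ d) := by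
  rw [mulVec_sub, sub_dotProduct, dotProduct_sub, dotProduct_sub,
    hS.dotProduct_mulVec_comm d c]
  ring

end Matrix.IsSymm

lemma dotProduct_mul_dotProduct_sq {m : Type*} [Fintype m] (c d x : m → ℝ) :
    ((c ⬝ᵥ x) * (d ⬝ᵥ x)) ^ 2
      = (((c + d) ⬝ᵥ x) ^ 4 + ((c - d) ⬝ᵥ x) ^ 4 - 2 * (c ⬝ᵥ x) ^ 4 - 2 * (d ⬝ᵥ x) ^ 4) / 12 := by
  rw [add_dotProduct, sub_dotProduct]
  ring

namespace IsGaussianRV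

variable {Ω : Type*} [MeasureSpace Ω] {p : ℕ} {S : Matrix (Fin p) (Fin p) ℝ}
  {X : Ω → Fin p → ℝ}

lemma hasLaw_dotProduct (hX : IsGaussianRV 0 S X) (c : Fin p → ℝ) :
    HasLaw (fun ω => c ⬝ᵥ X ω) (gaussianReal 0 (c ⬝ᵥ S *ᵥ c).toNNReal) where
  aemeasurable := ((continuous_const.dotProduct continuous_id).measurable.comp hX.1).aemeasurable
  map_eq := by simpa [dotProduct] using hX.2 c

lemma isProbabilityMeasure (hX : IsGaussianRV 0 S X) : IsProbabilityMeasure (volume : Measure Ω) :=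
  (hX.hasLaw_dotProduct 0).isProbabilityMeasure

lemma integrable_dotProduct_pow (hX : IsGaussianRV 0 S X) (c : Fin p → ℝ) (k : ℕ) :
    Integrable (fun ω => (c ⬝ᵥ X ω) ^ k) := by
  have hc := hX.hasLaw_dotProduct c
  refine (integrable_map_measure (f := fun ω => c ⬝ᵥ X ω) (g := fun x => x ^ k)
    (by fun_prop) hc.aemeasurable).1 ?_
  rw [hc.map_eq]
  exact integrable_pow_gaussianReal 0 _ k

lemma integral_pow_dotProduct (hX : IsGaussianRV 0 S X) (c : Fin p → ℝ) (k : ℕ) :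
    ∫ ω, (c ⬝ᵥ X ω) ^ k = ∫ x, x ^ k ∂gaussianReal 0 (c ⬝ᵥ S *ᵥ c).toNNReal :=
  (hX.hasLaw_dotProduct c).integral_comp (f := fun x => x ^ k) (by fun_prop)

lemma integral_dotProduct_sq (hS : S.PosSemidef) (hX : IsGaussianRV 0 S X) (c : Fin p → ℝ) :
    ∫ ω, (c ⬝ᵥ X ω) ^ 2 = c ⬝ᵥ S *ᵥ c := by
  rw [hX.integral_pow_dotProduct, integral_sq_gaussianReal,
    Real.coe_toNNReal _ (by simpa using hS.dotProduct_mulVec_nonneg c)]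

lemma integral_dotProduct_pow_four (hS : S.PosSemidef) (hX : IsGaussianRV 0 S X)
    (c : Fin p → ℝ) : ∫ ω, (c ⬝ᵥ X ω) ^ 4 = 3 * (c ⬝ᵥ S *ᵥ c) ^ 2 := by
  rw [hX.integral_pow_dotProduct, integral_pow_four_gaussianReal,
    Real.coe_toNNReal _ (by simpa using hS.dotProduct_mulVec_nonneg c)]

lemma integral_dotProduct_mul (hS : S.PosSemidef) (hX : IsGaussianRV 0 S X)
    (c d : Fin p → ℝ) : ∫ ω, (c ⬝ᵥ X ω) * (d ⬝ᵥ X ω) = c ⬝ᵥ S *ᵥ d := by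
  have polarization : ∀ ω, (c ⬝ᵥ X ω) * (d ⬝ᵥ X ω)
      = (((c + d) ⬝ᵥ X ω) ^ 2 - (c ⬝ᵥ X ω) ^ 2 - (d ⬝ᵥ X ω) ^ 2) / 2 := by
    intro ω; rw [add_dotProduct]; ring
  simp_rw [polarization]
  rw [integral_div, integral_sub ((hX.integrable_dotProduct_pow _ 2).sub'
      (hX.integrable_dotProduct_pow _ 2)) (hX.integrable_dotProduct_pow _ 2),
    integral_sub (hX.integrable_dotProduct_pow _ 2) (hX.integrable_dotProduct_pow _ 2),
    hX.integral_dotProduct_sq hS, hX.integral_dotProduct_sq hS, hX.integral_dotProduct_sq hS,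
    (isHermitian_iff_isSymm.1 hS.1).add_dotProduct_mulVec_add]
  ring

lemma integrable_dotProduct_mul_sq (hX : IsGaussianRV 0 S X) (c d : Fin p → ℝ) :
    Integrable (fun ω => ((c ⬝ᵥ X ω) * (d ⬝ᵥ X ω)) ^ 2) := by
  simp_rw [dotProduct_mul_dotProduct_sq]
  have h4 := fun c => hX.integrable_dotProduct_pow c 4
  exact ((((h4 _).fun_add (h4 _)).sub' ((h4 _).const_mul 2)).sub' ((h4 _).const_mul 2)).div_const 12

lemma memLp_dotProduct_mul (hX : IsGaussianRV 0 S X) (c d : Fin p → ℝ) :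
    MemLp (fun ω => (c ⬝ᵥ X ω) * (d ⬝ᵥ X ω)) 2 :=
  (memLp_two_iff_integrable_sq ((hX.hasLaw_dotProduct c).aemeasurable.mul
    (hX.hasLaw_dotProduct d).aemeasurable).aestronglyMeasurable).2
    (hX.integrable_dotProduct_mul_sq c d)

lemma integrable_dotProduct_mul (hX : IsGaussianRV 0 S X) (c d : Fin p → ℝ) :
    Integrable (fun ω => (c ⬝ᵥ X ω) * (d ⬝ᵥ X ω)) :=
  have := hX.isProbabilityMeasure
  (hX.memLp_dotProduct_mul c d).integrable one_le_two

lemma integral_dotProduct_mul_sq (hS : S.PosSemidef) (hX : IsGaussianRV 0 S X)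
    (c d : Fin p → ℝ) :
    ∫ ω, ((c ⬝ᵥ X ω) * (d ⬝ᵥ X ω)) ^ 2
      = (c ⬝ᵥ S *ᵥ c) * (d ⬝ᵥ S *ᵥ d) + 2 * (c ⬝ᵥ S *ᵥ d) ^ 2 := by
  have h4 := fun c => hX.integrable_dotProduct_pow c 4
  simp_rw [dotProduct_mul_dotProduct_sq]
  rw [integral_div, integral_sub (((h4 _).fun_add (h4 _)).sub' ((h4 _).const_mul 2))
      ((h4 _).const_mul 2), integral_sub ((h4 _).fun_add (h4 _)) ((h4 _).const_mul 2),
    integral_add (h4 _) (h4 _), integral_const_mul, integral_const_mul,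
    hX.integral_dotProduct_pow_four hS, hX.integral_dotProduct_pow_four hS,
    hX.integral_dotProduct_pow_four hS, hX.integral_dotProduct_pow_four hS,
    (isHermitian_iff_isSymm.1 hS.1).add_dotProduct_mulVec_add,
    (isHermitian_iff_isSymm.1 hS.1).sub_dotProduct_mulVec_sub]
  ring

lemma variance_dotProduct_mul (hS : S.PosSemidef) (hX : IsGaussianRV 0 S X)
    (c d : Fin p → ℝ) :
    variance (fun ω => (c ⬝ᵥ X ω) * (d ⬝ᵥ X ω)) volume
      = (c ⬝ᵥ S *ᵥ c) * (d ⬝ᵥ S *ᵥ d) + (c ⬝ᵥ S *ᵥ d) ^ 2 := by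
  have := hX.isProbabilityMeasure
  rw [variance_eq_sub (hX.memLp_dotProduct_mul c d)]
  simp only [Pi.pow_apply]
  rw [hX.integral_dotProduct_mul_sq hS, hX.integral_dotProduct_mul hS]
  ring

end IsGaussianRV

lemma dotProduct_Vmat_mulVec {Ω : Type*} {n p : ℕ} (X : Fin n → Ω → Fin p → ℝ) (ω : Ω)
    (a w : Fin p → ℝ) :
    a ⬝ᵥ Vmat X ω *ᵥ w = (n : ℝ)⁻¹ * ∑ k, (a ⬝ᵥ X k ω) * (w ⬝ᵥ X k ω) := by
  have hV : Vmat X ω = (n : ℝ)⁻¹ • ∑ k, vecMulVec (X k ω) (X k ω) := by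
    ext; simp [Vmat, vecMulVec_apply, Matrix.sum_apply]
  rw [hV, smul_mulVec, dotProduct_smul, smul_eq_mul, sum_mulVec, dotProduct_sum]
  simp only [vecMulVec_mulVec, dotProduct_smul, op_smul_eq_mul, dotProduct_comm w]

namespace IsIIDGaussian

variable {Ω : Type*} [MeasureSpace Ω] {n p : ℕ} {S : Matrix (Fin p) (Fin p) ℝ}
  {X : Fin n → Ω → Fin p → ℝ}

lemma isGaussianRV {m : Fin p → ℝ} (hX : IsIIDGaussian m S X) (k : Fin n) :
    IsGaussianRV m S (X k) :=
  hX.2 k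

lemma integral_dotProduct_Vmat_mulVec (hS : S.PosSemidef) (hX : IsIIDGaussian 0 S X)
    (hn : n ≠ 0) (a w : Fin p → ℝ) :
    ∫ ω, a ⬝ᵥ Vmat X ω *ᵥ w = a ⬝ᵥ S *ᵥ w := by
  simp_rw [dotProduct_Vmat_mulVec]
  rw [integral_const_mul, integral_finsetSum _
    fun k _ => (hX.isGaussianRV k).integrable_dotProduct_mul a w]
  simp_rw [(hX.isGaussianRV _).integral_dotProduct_mul hS]
  simp [hn]

lemma variance_dotProduct_Vmat_mulVec (hS : S.PosSemidef) (hX : IsIIDGaussian 0 S X)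
    (a w : Fin p → ℝ) :
    variance (fun ω => a ⬝ᵥ Vmat X ω *ᵥ w) volume
      = ((a ⬝ᵥ S *ᵥ a) * (w ⬝ᵥ S *ᵥ w) + (a ⬝ᵥ S *ᵥ w) ^ 2) / n := by
  have hg : Measurable fun x : Fin p → ℝ => (a ⬝ᵥ x) * (w ⬝ᵥ x) :=
    ((continuous_const.dotProduct continuous_id).mul
      (continuous_const.dotProduct continuous_id)).measurable
  simp_rw [dotProduct_Vmat_mulVec]
  rw [variance_const_mul, ← Finset.sum_fn, IndepFun.variance_sum
    (fun k _ => (hX.isGaussianRV k).memLp_dotProduct_mul a w)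
    fun k _ l _ hkl => (hX.1.indepFun hkl).comp hg hg]
  simp_rw [(hX.isGaussianRV _).variance_dotProduct_mul hS]
  rw [Finset.sum_const, Finset.card_univ, Fintype.card_fin, nsmul_eq_mul]
  field_simp

end IsIIDGaussian

section SOrthogonalProjection

variable {m k : Type*} [Fintype m] [Fintype k] [DecidableEq k]

lemma mulVec_dotProduct_mulVec_of_transpose_mul_eq {S P : Matrix m m ℝ}
    (hPS : Pᵀ * S = S * P) (v w : m → ℝ) : (P *ᵥ v) ⬝ᵥ S *ᵥ w = v ⬝ᵥ S *ᵥ (P *ᵥ w) := by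
  rw [dotProduct_comm, ← dotProduct_transpose_mulVec, mulVec_mulVec, hPS, ← mulVec_mulVec]

lemma sub_mulVec_dotProduct_mulVec_eq_zero {S P : Matrix m m ℝ} (hPS : Pᵀ * S = S * P)
    {w : m → ℝ} (hw : P *ᵥ w = w) (v : m → ℝ) : (v - P *ᵥ v) ⬝ᵥ S *ᵥ w = 0 := by
  rw [sub_dotProduct, mulVec_dotProduct_mulVec_of_transpose_mul_eq hPS, hw, sub_self]

lemma sub_mulVec_dotProduct_mulVec_sub_mulVec {S P : Matrix m m ℝ} (hPS : Pᵀ * S = S * P)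
    (hP : P * P = P) (v : m → ℝ) :
    (v - P *ᵥ v) ⬝ᵥ S *ᵥ (v - P *ᵥ v) = v ⬝ᵥ S *ᵥ v - v ⬝ᵥ (S * P) *ᵥ v := by
  have hPv : P *ᵥ (P *ᵥ v) = P *ᵥ v := by rw [mulVec_mulVec, hP]
  rw [mulVec_sub, dotProduct_sub, sub_mulVec_dotProduct_mulVec_eq_zero hPS hPv, sub_zero,
    sub_dotProduct, mulVec_dotProduct_mulVec_of_transpose_mul_eq hPS, mulVec_mulVec]

/-- The projection onto the column space of `B` that is orthogonal for `⟪x, y⟫ = xᵀ S y`. -/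
def sOrthProj (S : Matrix m m ℝ) (B : Matrix m k ℝ) : Matrix m m ℝ :=
  B * (Bᵀ * S * B)⁻¹ * Bᵀ * S

lemma transpose_sOrthProj_mul {S : Matrix m m ℝ} (hS : S.IsSymm) (B : Matrix m k ℝ) :
    (sOrthProj S B)ᵀ * S = S * sOrthProj S B := by
  simp only [sOrthProj, transpose_mul, transpose_transpose, transpose_nonsing_inv, hS.eq,
    Matrix.mul_assoc]

lemma sOrthProj_mul {S : Matrix m m ℝ} {B : Matrix m k ℝ} (hQ : IsUnit (Bᵀ * S * B).det) :
    sOrthProj S B * B = B :=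
  calc sOrthProj S B * B = B * ((Bᵀ * S * B)⁻¹ * (Bᵀ * S * B)) := by
        simp only [sOrthProj, Matrix.mul_assoc]
    _ = B := by rw [nonsing_inv_mul _ hQ, Matrix.mul_one]

lemma sOrthProj_mul_self {S : Matrix m m ℝ} {B : Matrix m k ℝ} (hQ : IsUnit (Bᵀ * S * B).det) :
    sOrthProj S B * sOrthProj S B = sOrthProj S B :=
  calc sOrthProj S B * sOrthProj S B = sOrthProj S B * B * ((Bᵀ * S * B)⁻¹ * Bᵀ * S) := by
        simp only [sOrthProj, Matrix.mul_assoc]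
    _ = sOrthProj S B := by rw [sOrthProj_mul hQ]; simp only [sOrthProj, Matrix.mul_assoc]

end SOrthogonalProjection

section SelectionMatrix

variable {p s : ℕ} {φ : Fin s → Fin p}

lemma transpose_selMat_mul_selMat (hφ : Function.Injective φ) : (selMat φ)ᵀ * selMat φ = 1 := by
  ext b b'
  simp [selMat, Matrix.mul_apply, Matrix.one_apply, hφ.eq_iff, eq_comm]

lemma mulVec_injective_selMat (hφ : Function.Injective φ) :
    Function.Injective (selMat φ).mulVec :=
  Function.LeftInverse.injective (g := (selMat φ)ᵀ.mulVec) fun x => by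
    rw [mulVec_mulVec, transpose_selMat_mul_selMat hφ, one_mulVec]

lemma selMat_mulVec_transpose_mulVec (hφ : Function.Injective φ) {w : Fin p → ℝ}
    (hw : ∀ l ∉ Set.range φ, w l = 0) : selMat φ *ᵥ ((selMat φ)ᵀ *ᵥ w) = w := by
  funext l
  by_cases hl : l ∈ Set.range φ
  · obtain ⟨b, rfl⟩ := hl
    simp [selMat, mulVec, dotProduct, hφ.eq_iff]
  · simp only [selMat, mulVec, dotProduct, transpose_apply, of_apply, hw l hl]
    exact Finset.sum_eq_zero fun b _ => by rw [if_neg fun h => hl ⟨b, h.symm⟩, zero_mul]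

lemma Matrix.PosDef.transpose_selMat_mul_mul_selMat {S : Matrix (Fin p) (Fin p) ℝ}
    (hS : S.PosDef) (hφ : Function.Injective φ) : ((selMat φ)ᵀ * S * selMat φ).PosDef := by
  simpa [conjTranspose_eq_transpose_of_trivial] using
    hS.conjTranspose_mul_mul_same (mulVec_injective_selMat hφ)

end SelectionMatrix

lemma mulVec_col_inv {m : Type*} [Fintype m] [DecidableEq m] {S : Matrix m m ℝ}
    (hS : IsUnit S.det) (i : m) : S *ᵥ (fun l => S⁻¹ l i) = Pi.single i 1 := by
  rw [show (fun l => S⁻¹ l i) = S⁻¹ *ᵥ Pi.single i 1 from (mulVec_single_one _ i).symm,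
    mulVec_mulVec, mul_nonsing_inv _ hS, one_mulVec]

theorem statement12_general {Ω : Type*} [MeasureSpace Ω]
    {n p s : ℕ} (hn : 0 < n) (S : Matrix (Fin p) (Fin p) ℝ) (hS : S.PosDef)
    (X : Fin n → Ω → Fin p → ℝ) (hX : IsIIDGaussian (fun _ => 0) S X)
    (i j : Fin p)
    (φ : Fin s → Fin p) (hφ : Function.Injective φ)
    (hsupp : Set.range φ = {l | S⁻¹ l i ≠ 0}) :
    let B := selMat φ
    let a : Fin p → ℝ := (Pi.single j 1 : Fin p → ℝ)
        - (B * (Bᵀ * S * B)⁻¹ * Bᵀ * S).mulVec (Pi.single j 1 : Fin p → ℝ)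
    (∫ ω, a ⬝ᵥ (Vmat X ω).mulVec (fun l => S⁻¹ l i) ∂volume = 0) ∧
    variance (fun ω => a ⬝ᵥ (Vmat X ω).mulVec (fun l => S⁻¹ l i)) volume
      = (S⁻¹ i i * S j j
          - S⁻¹ i i * ((Pi.single j 1 : Fin p → ℝ) ⬝ᵥ
              (S * B * (Bᵀ * S * B)⁻¹ * Bᵀ * S).mulVec (Pi.single j 1 : Fin p → ℝ))) / n := by
  intro B a
  set w : Fin p → ℝ := fun l => S⁻¹ l i
  have hQ : IsUnit (Bᵀ * S * B).det :=
    isUnit_iff_ne_zero.2 (hS.transpose_selMat_mul_mul_selMat hφ).det_pos.ne'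
  have hPS := transpose_sOrthProj_mul (isHermitian_iff_isSymm.1 hS.1) B
  have hw : B *ᵥ (Bᵀ *ᵥ w) = w :=
    selMat_mulVec_transpose_mulVec hφ fun l hl => by simpa [hsupp] using hl
  have hPw : sOrthProj S B *ᵥ w = w := by
    conv_lhs => rw [← hw, mulVec_mulVec, sOrthProj_mul hQ, hw]
  have haw : a ⬝ᵥ S *ᵥ w = 0 := sub_mulVec_dotProduct_mulVec_eq_zero hPS hPw _
  have haa : a ⬝ᵥ S *ᵥ a = S j j - (Pi.single j 1 : Fin p → ℝ) ⬝ᵥ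
      (S * B * (Bᵀ * S * B)⁻¹ * Bᵀ * S) *ᵥ Pi.single j 1 := by
    refine (sub_mulVec_dotProduct_mulVec_sub_mulVec hPS (sOrthProj_mul_self hQ) _).trans ?_
    simp [sOrthProj, Matrix.mul_assoc]
  have hww : w ⬝ᵥ S *ᵥ w = S⁻¹ i i := by
    simp [w, mulVec_col_inv (isUnit_iff_ne_zero.2 hS.det_pos.ne')]
  refine ⟨(hX.integral_dotProduct_Vmat_mulVec hS.posSemidef hn.ne' a w).trans haw, ?_⟩
  rw [hX.variance_dotProduct_Vmat_mulVec hS.posSemidef, haw, hww, haa]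
  ring

/-- fix `i ≠ j` with `ω*_{ij} = 0`.  With `B = B_{i,0}` the selection matrix
of the support of `w*_i`, `Ω_i* = (Bᵀ Σ* B)⁻¹`, and `a = e_j − B Ω_i* Bᵀ Σ* e_j`, we have
`E(aᵀ V_n w*_i) = 0` and
`Var(aᵀ V_n w*_i) = (ω*_{ii} σ*_{jj} − ω*_{ii} e_jᵀ Σ* B Ω_i* Bᵀ Σ* e_j)/n`. -/
theorem statement12 {Ω : Type*} [MeasureSpace Ω] [IsProbabilityMeasure (volume : Measure Ω)]
    {n p s : ℕ} (hn : 0 < n) (S : Matrix (Fin p) (Fin p) ℝ) (hS : S.PosDef)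
    (X : Fin n → Ω → Fin p → ℝ) (hX : IsIIDGaussian (fun _ => 0) S X)
    (i j : Fin p) (hij : i ≠ j) (hzero : S⁻¹ i j = 0)
    (φ : Fin s → Fin p) (hφ : Function.Injective φ)
    (hsupp : Set.range φ = {l | S⁻¹ l i ≠ 0}) :
    let B := selMat φ
    let a : Fin p → ℝ := (Pi.single j 1 : Fin p → ℝ)
        - (B * (Bᵀ * S * B)⁻¹ * Bᵀ * S).mulVec (Pi.single j 1 : Fin p → ℝ)
    (∫ ω, a ⬝ᵥ (Vmat X ω).mulVec (fun l => S⁻¹ l i) ∂volume = 0) ∧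
    variance (fun ω => a ⬝ᵥ (Vmat X ω).mulVec (fun l => S⁻¹ l i)) volume
      = (S⁻¹ i i * S j j
          - S⁻¹ i i * ((Pi.single j 1 : Fin p → ℝ) ⬝ᵥ
              (S * B * (Bᵀ * S * B)⁻¹ * Bᵀ * S).mulVec (Pi.single j 1 : Fin p → ℝ))) / n :=
  statement12_general hn S hS X hX i j φ hφ hsupp
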